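/- arXiv:1701.03165 — 3 statements merged into one kernel-verified Lean document; each statement's English description precedes it below -/
import Mathlib

section
/- Let C be a countable torsion-free group. Then there exists a finitely generated group Γ and an injective group homomorphism φ : C → Γ such that the image φ(C) is a malnormal subgroup of Γ. -/
/-- A subgroup `H` of a group `G` is *malnormal* if for every `g ∉ H`,
`g⁻¹ H g ∩ H = {1}`. -/
def Malnormal {G : Type*} [Group G] (H : Subgroup G) : Prop :=
  ∀ g : G, g ∉ H → ∀ h : G, h ∈ H → g⁻¹ * h * g ∈ H → h = 1

/-!
Enumerate `C` by `e : ℤ → C`. In `C ∗ ⟨s⟩ ∗ ⟨u⟩` the elements `aₙ = uⁿ s u⁻ⁿ` and `e n * aₙ`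
are two free bases of free subgroups: the projection onto `FreeGroup ℤ ⋊ ℤ` killing `C` and sending
`s` to the generator `0` and `u` to the shift maps both families to the standard basis. The HNN
extension conjugating one family to the other is generated by `t`, `s` and `u`, because
`e n = t aₙ t⁻¹ aₙ⁻¹`. Both free subgroups meet the kernel of the projection trivially, hence meet
no conjugate of `C`, and by Britton's lemma a malnormal subgroup of the base with this property
stays malnormal in an HNN extension; the same applies to `C` inside `C ∗ ⟨s⟩ ∗ ⟨u⟩`.
-/

theorem malnormal_top {G : Type*} [Group G] : Malnormal (⊤ : Subgroup G) :=
  fun g hg => absurd (Subgroup.mem_top g) hg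

noncomputable def MonoidHom.rangeMulEquiv {K G : Type*} [Group K] [Group G] {f g : K →* G}
    (hf : Function.Injective f) (hg : Function.Injective g) : f.range ≃* g.range :=
  (MonoidHom.ofInjective hf).symm.trans (MonoidHom.ofInjective hg)

namespace HNNExtension

open NormalWord

variable {G : Type*} [Group G] {A B : Subgroup G} {φ : A ≃* B}

theorem NormalWord.ReducedWord.exists_prod_eq (g : HNNExtension G A B φ) :
    ∃ w : ReducedWord G A B, w.prod φ = g := by
  obtain ⟨d⟩ := TransversalPair.nonempty G A B
  exact ⟨(g • NormalWord.empty : NormalWord d).toReducedWord, by simp [NormalWord.prod_smul]⟩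

theorem NormalWord.ReducedWord.exists_prod_mul_of (w : ReducedWord G A B) (hw : w.toList ≠ [])
    (y : G) :
    ∃ w' : ReducedWord G A B, w'.head = w.head ∧ w'.prod φ = w.prod φ * of y := by
  obtain ⟨L, a, hL⟩ := (List.eq_nil_or_concat w.toList).resolve_left hw
  have hchain := w.chain
  rw [hL, List.concat_eq_append, List.isChain_append] at hchain
  refine ⟨⟨w.head, L ++ [(a.1, a.2 * y)], List.isChain_append.2
    ⟨hchain.1, List.isChain_singleton _, fun b hb c hc => ?_⟩⟩, rfl, ?_⟩
  · obtain rfl : (a.1, a.2 * y) = c := by simpa using hc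
    exact hchain.2.2 b hb a (by simp)
  · simp [ReducedWord.prod, hL, mul_assoc]

/-- `of x * g` and `g * of y` have reduced words differing only in the head and the last letter,
so by uniqueness of normal forms the heads lie in one coset of the first letter's subgroup. -/
theorem mem_range_or_exists_conj_mem_of_conj_mem_range {x : G} {g : HNNExtension G A B φ}
    (h : g⁻¹ * of x * g ∈ (of : G →* HNNExtension G A B φ).range) :
    g ∈ (of : G →* HNNExtension G A B φ).range ∨ ∃ w : G, w⁻¹ * x * w ∈ A ∨ w⁻¹ * x * w ∈ B := by
  obtain ⟨y, hy⟩ := h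
  obtain ⟨w, rfl⟩ := ReducedWord.exists_prod_eq (φ := φ) g
  rcases hL : w.toList with _ | ⟨p, L⟩
  · exact .inl ⟨w.head, by simp [ReducedWord.prod, hL]⟩
  obtain ⟨w', hhead, hprod⟩ := w.exists_prod_mul_of (by simp [hL]) y
  have hxw : ({ w with head := x * w.head } : ReducedWord G A B).prod φ = w'.prod φ := by
    rw [hprod, hy]
    simp [ReducedWord.prod, mul_assoc]
  have hmem := (ReducedWord.map_fst_eq_and_of_prod_eq φ hxw).2 p.1 (by simp [hL])
  replace hmem : w.head⁻¹ * x * w.head ∈ toSubgroup A B (-p.1) := by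
    rw [← inv_mem_iff]; simpa [hhead, mul_assoc] using hmem
  refine .inr ⟨w.head, ?_⟩
  rcases Int.units_eq_one_or p.1 with h | h <;> simp_all

theorem malnormal_map_of {H : Subgroup G} (hH : Malnormal H)
    (hA : ∀ g : G, ∀ h ∈ H, g⁻¹ * h * g ∈ A → h = 1)
    (hB : ∀ g : G, ∀ h ∈ H, g⁻¹ * h * g ∈ B → h = 1) :
    Malnormal (H.map (of : G →* HNNExtension G A B φ)) := by
  rintro γ hγ _ ⟨h, hh, rfl⟩ ⟨h', hh', hconj⟩
  rcases mem_range_or_exists_conj_mem_of_conj_mem_range ⟨h', hconj⟩ with ⟨g, rfl⟩ | ⟨w, hw | hw⟩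
  · have hg : g ∉ H := fun hg => hγ ⟨g, hg, rfl⟩
    have : g⁻¹ * h * g = h' := of_injective (φ := φ) (by simpa using hconj.symm)
    rw [hH g hg h hh (this ▸ hh'), map_one]
  · rw [hA w h hh hw, map_one]
  · rw [hB w h hh hw, map_one]

theorem eq_top_of_t_mem_of_comap_eq_top {T : Subgroup (HNNExtension G A B φ)} (ht : t ∈ T)
    (hT : T.comap of = ⊤) : T = ⊤ := by
  rw [Subgroup.eq_top_iff']
  intro x
  induction x using induction_on with
  | of g => exact Subgroup.mem_comap.1 (hT ▸ Subgroup.mem_top g)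
  | t => exact ht
  | mul x y hx hy => exact mul_mem hx hy
  | inv x hx => exact inv_mem hx

theorem rangeMulEquiv_eq_conj {K : Type*} [Group K] {f g : K →* G}
    (hf : Function.Injective f) (hg : Function.Injective g) (k : K) :
    (of (g k) : HNNExtension G f.range g.range (MonoidHom.rangeMulEquiv hf hg)) =
      t * of (f k) * t⁻¹ := by
  simpa only [MonoidHom.rangeMulEquiv, MulEquiv.trans_apply, MulEquiv.symm_apply_apply,
    MonoidHom.ofInjective_apply] using
    equiv_eq_conj (φ := MonoidHom.rangeMulEquiv hf hg) (MonoidHom.ofInjective hf k)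

end HNNExtension

open HNNExtension

/-- The free product `G ∗ ℤ`, as an HNN extension over trivial subgroups so that the lemmas on
HNN extensions apply to it. -/
abbrev FreeLetterExtension (G : Type*) [Group G] : Type _ :=
  HNNExtension G ⊥ ⊥ (MulEquiv.refl (⊥ : Subgroup G))

namespace FreeLetterExtension

variable {G H : Type*} [Group G] [Group H]

def lift (f : G →* H) (x : H) : FreeLetterExtension G →* H :=
  HNNExtension.lift f x fun a => by simp [Subsingleton.elim a 1]

@[simp] theorem lift_of (f : G →* H) (x : H) (g : G) : lift f x (of g) = f g := by simp [lift]
@[simp] theorem lift_t (f : G →* H) (x : H) : lift f x t = x := by simp [lift]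

theorem malnormal_map_of {K : Subgroup G} (hK : Malnormal K) :
    Malnormal (K.map (of : G →* FreeLetterExtension G)) :=
  have hbot : ∀ g : G, ∀ h ∈ K, g⁻¹ * h * g ∈ (⊥ : Subgroup G) → h = 1 := fun g h _ hgh =>
    (conj_eq_one_iff (a := g⁻¹)).1 (by rwa [inv_inv, ← Subgroup.mem_bot])
  HNNExtension.malnormal_map_of hK hbot hbot

end FreeLetterExtension

def shiftAut : Multiplicative ℤ →* MulAut (FreeGroup ℤ) where
  toFun n := FreeGroup.freeGroupCongr (Equiv.addLeft n.toAdd)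
  map_one' := MulEquiv.toMonoidHom_injective <| FreeGroup.ext_hom _ _ fun k => by simp
  map_mul' m n := MulEquiv.toMonoidHom_injective <| FreeGroup.ext_hom _ _ fun k => by
    simp [MulAut.mul_apply, add_assoc]

theorem shiftAut_ofAdd_of (n k : ℤ) :
    shiftAut (.ofAdd n) (FreeGroup.of k) = FreeGroup.of (n + k) := by
  simp [shiftAut]

namespace MalnormalEmbedding

variable (C : Type*) [Group C]

abbrev Base : Type _ := FreeLetterExtension (FreeLetterExtension C)

def incl : C →* Base C := of.comp of

def s : Base C := of t

def u : Base C := t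

def freeFamily : FreeGroup ℤ →* Base C :=
  FreeGroup.lift fun n => u C ^ n * s C * (u C ^ n)⁻¹

def twistedFamily (e : ℤ → C) : FreeGroup ℤ →* Base C :=
  FreeGroup.lift fun n => incl C (e n) * (u C ^ n * s C * (u C ^ n)⁻¹)

theorem freeFamily_of (n : ℤ) : freeFamily C (.of n) = u C ^ n * s C * (u C ^ n)⁻¹ :=
  FreeGroup.lift_apply_of

@[simp] theorem twistedFamily_of (e : ℤ → C) (n : ℤ) :
    twistedFamily C e (.of n) = incl C (e n) * freeFamily C (.of n) := by
  simp [twistedFamily, freeFamily_of]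

def proj : Base C →* FreeGroup ℤ ⋊[shiftAut] Multiplicative ℤ :=
  FreeLetterExtension.lift
    (SemidirectProduct.inl.comp (FreeLetterExtension.lift 1 (FreeGroup.of 0)))
    (SemidirectProduct.inr (.ofAdd 1))

variable {C}

@[simp] theorem proj_incl (c : C) : proj C (incl C c) = 1 := by
  simp [proj, incl]

theorem proj_freeFamily_of (n : ℤ) :
    proj C (freeFamily C (.of n)) = SemidirectProduct.inl (FreeGroup.of n) := by
  have hu : proj C (u C ^ n) = SemidirectProduct.inr (.ofAdd n) := by
    rw [map_zpow, u, proj, FreeLetterExtension.lift_t, ← map_zpow, ← ofAdd_zsmul, smul_eq_mul,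
      mul_one]
  have hs : proj C (s C) = SemidirectProduct.inl (FreeGroup.of 0) := by simp [proj, s]
  rw [freeFamily_of, map_mul, map_mul, map_inv, hu, hs, ← map_inv, ← SemidirectProduct.inl_aut,
    shiftAut_ofAdd_of, add_zero]

theorem proj_comp_freeFamily : (proj C).comp (freeFamily C) = SemidirectProduct.inl :=
  FreeGroup.ext_hom _ _ fun n => by simp [proj_freeFamily_of]

theorem proj_comp_twistedFamily (e : ℤ → C) :
    (proj C).comp (twistedFamily C e) = SemidirectProduct.inl :=
  FreeGroup.ext_hom _ _ fun n => by simp [proj_freeFamily_of]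

theorem freeFamily_injective : Function.Injective (freeFamily C) := by
  refine .of_comp (f := proj C) ?_
  rw [← MonoidHom.coe_comp, proj_comp_freeFamily]
  exact SemidirectProduct.inl_injective

theorem twistedFamily_injective (e : ℤ → C) : Function.Injective (twistedFamily C e) := by
  refine .of_comp (f := proj C) ?_
  rw [← MonoidHom.coe_comp, proj_comp_twistedFamily]
  exact SemidirectProduct.inl_injective

theorem eq_one_of_conj_mem_range {f : FreeGroup ℤ →* Base C}
    (hf : (proj C).comp f = SemidirectProduct.inl) (g : Base C) {h : Base C}
    (hh : h ∈ (incl C).range) (hgh : g⁻¹ * h * g ∈ f.range) : h = 1 := by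
  obtain ⟨c, rfl⟩ := hh
  obtain ⟨m, hm⟩ := hgh
  have hm1 : m = 1 := SemidirectProduct.inl_injective <| by rw [← hf]; simp [hm]
  refine (conj_eq_one_iff (a := g⁻¹)).1 ?_
  rw [inv_inv, ← hm, hm1, map_one]

variable (C) in
noncomputable abbrev Target (e : ℤ → C) : Type _ :=
  HNNExtension (Base C) (freeFamily C).range (twistedFamily C e).range
    (MonoidHom.rangeMulEquiv freeFamily_injective (twistedFamily_injective e))

variable (C) in
noncomputable def embedding (e : ℤ → C) : C →* Target C e := of.comp (incl C)

theorem embedding_injective (e : ℤ → C) : Function.Injective (embedding C e) :=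
  (of_injective _).comp ((of_injective _).comp (of_injective _))

theorem malnormal_range_embedding (e : ℤ → C) : Malnormal (embedding C e).range := by
  have hincl : Malnormal (incl C).range := by
    rw [incl, MonoidHom.range_comp, MonoidHom.range_eq_map]
    exact FreeLetterExtension.malnormal_map_of (FreeLetterExtension.malnormal_map_of malnormal_top)
  rw [embedding, MonoidHom.range_comp]
  exact HNNExtension.malnormal_map_of hincl
    (fun g _ hh => eq_one_of_conj_mem_range proj_comp_freeFamily g hh)
    (fun g _ hh => eq_one_of_conj_mem_range (proj_comp_twistedFamily e) g hh)

theorem fg_target {e : ℤ → C} (he : Function.Surjective e) : Group.FG (Target C e) := by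
  set T : Subgroup (Target C e) := Subgroup.closure {t, of (u C), of (s C)}
  have ht : t ∈ T := Subgroup.subset_closure (by simp)
  have hu : of (u C) ∈ T := Subgroup.subset_closure (by simp)
  have hs : of (s C) ∈ T := Subgroup.subset_closure (by simp)
  have hfree : ∀ n : ℤ, of (freeFamily C (.of n)) ∈ T := fun n => by
    rw [freeFamily_of, map_mul, map_mul, map_inv, map_zpow]
    exact mul_mem (mul_mem (zpow_mem hu n) hs) (inv_mem (zpow_mem hu n))
  have hC : ∀ c : C, of (incl C c) ∈ T := fun c => by
    obtain ⟨n, rfl⟩ := he c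
    have hrel : (of (incl C (e n)) : Target C e) =
        t * of (freeFamily C (.of n)) * t⁻¹ * (of (freeFamily C (.of n)))⁻¹ := by
      rw [← rangeMulEquiv_eq_conj freeFamily_injective (twistedFamily_injective e),
        ← map_inv, ← map_mul, twistedFamily_of, mul_inv_cancel_right]
    rw [hrel]
    exact mul_mem (mul_mem (mul_mem ht (hfree n)) (inv_mem ht)) (inv_mem (hfree n))
  refine Group.fg_iff.2 ⟨{t, of (u C), of (s C)}, ?_, Set.toFinite _⟩
  refine eq_top_of_t_mem_of_comap_eq_top ht ?_
  refine eq_top_of_t_mem_of_comap_eq_top hu ?_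
  refine eq_top_of_t_mem_of_comap_eq_top hs ?_
  exact (Subgroup.eq_top_iff' _).2 hC

end MalnormalEmbedding

theorem exists_fg_malnormal_embedding_general (C : Type) [Group C] [Countable C] :
    ∃ (Γ : Type) (_ : Group Γ), Group.FG Γ ∧
      ∃ φ : C →* Γ, Function.Injective φ ∧ Malnormal φ.range := by
  obtain ⟨e, he⟩ := exists_surjective_nat C
  have he' : Function.Surjective (e ∘ Int.toNat) :=
    he.comp fun n => ⟨n, Int.toNat_natCast n⟩
  exact ⟨_, inferInstance, MalnormalEmbedding.fg_target he', _,
    MalnormalEmbedding.embedding_injective _, MalnormalEmbedding.malnormal_range_embedding _⟩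

/-- Every countable torsion-free group embeds as a malnormal subgroup of some
finitely generated group. -/
theorem exists_fg_malnormal_embedding (C : Type) [Group C] [Countable C]
    (hC : ∀ g : C, g ≠ 1 → ¬IsOfFinOrder g) :
    ∃ (Γ : Type) (_ : Group Γ), Group.FG Γ ∧
      ∃ φ : C →* Γ, Function.Injective φ ∧ Malnormal φ.range :=
  exists_fg_malnormal_embedding_general C
end

section
/- Let G be a group, C a subgroup of G, and (N_i)_{i ∈ ℕ} a monotone increasing sequence of normal subgroups of G with N = ⋃_i N_i. Suppose that C ∩ N = {1} and that for each i the image of C in the quotient G/N_i is a malnormal subgroup of G/N_i. Then the image of C in G/N is a malnormal subgroup of G/N. -/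
/-!
Pulled back to `G`, malnormality of the image of `C` in `G ⧸ K` says: if `x ∉ C ⊔ K`, `c ∈ C` and
`x⁻¹ * c * x = c' * k` with `c' ∈ C`, `k ∈ K`, then `c ∈ K`. For `K` the union of the `N i`, the
element `k` already lies in some `N i`, and `x ∉ C ⊔ N i` since `N i ≤ K`; malnormality modulo
`N i` gives `c ∈ N i ≤ K`.
-/

open Function

section

variable {G Q : Type*} [Group G] [Group Q]

theorem malnormal_map_iff {f : G →* Q} (hf : Surjective f) (C : Subgroup G) :
    Malnormal (C.map f) ↔
      ∀ x, x ∉ C ⊔ f.ker → ∀ c ∈ C, x⁻¹ * c * x ∈ C ⊔ f.ker → c ∈ f.ker := by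
  have hmem (y : G) : f y ∈ C.map f ↔ y ∈ C ⊔ f.ker := by
    rw [← Subgroup.comap_map_eq, Subgroup.mem_comap]
  constructor
  · intro hC x hx c hc hconj
    refine hC (f x) ((hmem x).not.2 hx) (f c) ⟨c, hc, rfl⟩ ?_
    simpa only [map_mul, map_inv] using (hmem _).2 hconj
  · rintro hC q hq _ ⟨c, hc, rfl⟩ hconj
    obtain ⟨x, rfl⟩ := hf q
    rw [← map_inv, ← map_mul, ← map_mul, hmem] at hconj
    exact hC x ((hmem x).not.1 hq) c hc hconj

theorem Subgroup.exists_mem_sup_of_subset_iUnion {ι : Type*} {C L : Subgroup G} [L.Normal]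
    {N : ι → Subgroup G} (hL : (L : Set G) ⊆ ⋃ i, (N i : Set G)) {g : G} (hg : g ∈ C ⊔ L) :
    ∃ i, g ∈ C ⊔ N i := by
  obtain ⟨c, hc, n, hn, rfl⟩ := Subgroup.mem_sup_of_normal_right.1 hg
  obtain ⟨i, hi⟩ := Set.mem_iUnion.1 (hL hn)
  exact ⟨i, mul_mem (Subgroup.mem_sup_left hc) (Subgroup.mem_sup_right hi)⟩

end

theorem malnormal_quotient_of_union_general {G : Type*} [Group G] (C : Subgroup G)
    (N : ℕ → Subgroup G) [∀ i, (N i).Normal]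
    (Nu : Subgroup G) [Nu.Normal] (hNu : (Nu : Set G) = ⋃ i, (N i : Set G))
    (hmal : ∀ i, Malnormal (C.map (QuotientGroup.mk' (N i)))) :
    Malnormal (C.map (QuotientGroup.mk' Nu)) := by
  have hle (i : ℕ) : N i ≤ Nu := fun x hx => by
    rw [← SetLike.mem_coe, hNu]
    exact Set.mem_iUnion.2 ⟨i, hx⟩
  have hmal' (i : ℕ) := (malnormal_map_iff (QuotientGroup.mk'_surjective (N i)) C).1 (hmal i)
  rw [malnormal_map_iff (QuotientGroup.mk'_surjective Nu)]
  simp only [QuotientGroup.ker_mk'] at hmal' ⊢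
  intro x hx c hc hconj
  obtain ⟨i, hi⟩ := Subgroup.exists_mem_sup_of_subset_iUnion hNu.subset hconj
  exact hle i (hmal' i x (fun hxi => hx (sup_le_sup_left (hle i) C hxi)) c hc hi)

/-- If `C` is a subgroup of `G`, `(N i)` is a monotone increasing sequence of
normal subgroups of `G` with union `N`, `C ∩ N = {1}`, and the image of `C` in
each quotient `G ⧸ N i` is malnormal, then the image of `C` in `G ⧸ N` is
malnormal. -/
theorem malnormal_quotient_of_union {G : Type*} [Group G] (C : Subgroup G)
    (N : ℕ → Subgroup G) [∀ i, (N i).Normal] (hmono : Monotone N)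
    (Nu : Subgroup G) [Nu.Normal] (hNu : (Nu : Set G) = ⋃ i, (N i : Set G))
    (htriv : C ⊓ Nu = ⊥)
    (hmal : ∀ i, Malnormal (C.map (QuotientGroup.mk' (N i)))) :
    Malnormal (C.map (QuotientGroup.mk' Nu)) :=
  malnormal_quotient_of_union_general C N Nu hNu hmal
end

section
/- Let C be a countable torsion-free group and let x ∈ C be a nontrivial element of the center of C. Then there exists a finitely generated group Γ and an injective group homomorphism φ : C → Γ such that the centralizer of φ(x) in Γ is exactly the image φ(C). -/
/-- A predicate on a monoid saying that only 1 is of finite order. -/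
def Monoid.IsTorsionFree (G : Type*) [Monoid G] : Prop :=
  ∀ g : G, g ≠ 1 → ¬IsOfFinOrder g

/-!
Enumerate `C` as `c₀, c₁, …` and let `sₙ` be the free generators of `C ∗ F(ℕ)`. Adjoining a
stable letter `t₁` with `t₁ sₙ t₁⁻¹ = cₙ sₙ`, and then a stable letter `t₂` with
`t₂ sₙ t₂⁻¹ = sₙ₊₁`, gives a group generated by `s₀`, `t₁`, `t₂` that contains `C`.

By Britton's lemma, if no conjugate of `x` lies in the associated subgroups of an HNN extension,
then every element conjugating `x` into the base group lies in the base group; in particular the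
centralizer of `x` does not grow. No conjugate of `x ≠ 1` lies in `F(ℕ)` (project onto `C`) or in
its image under `sₙ ↦ cₙ sₙ` (undo the twist), so this applies to the first extension; the first
extension creates no new conjugates of `x` in the base group, so it also applies to the second.
In `C ∗ F(ℕ)` the centralizer of `x` is that in `C`, since every element lies in some
`C ∗ F(n)` and `C ∗ F(n + 1)` is an HNN extension of `C ∗ F(n)` with trivial associated subgroups.
-/

open Function

theorem Subgroup.centralizer_singleton_eq_map_of_le_range {G H : Type*} [Group G] [Group H]
    {f : G →* H} (hf : Injective f) {x : G} (h : centralizer {f x} ≤ f.range) :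
    centralizer {f x} = (centralizer {x}).map f := by
  refine le_antisymm (fun y hy => ?_) ?_
  · obtain ⟨g, rfl⟩ := h hy
    refine ⟨g, mem_centralizer_singleton_iff.mpr (hf ?_), rfl⟩
    simpa using mem_centralizer_singleton_iff.mp hy
  · simpa using map_centralizer_le_centralizer_image {x} f

theorem Subgroup.apply_mem_centralizer_singleton {G H : Type*} [Group G] [Group H] (f : G →* H)
    {x y : G} (hy : y ∈ centralizer {x}) : f y ∈ centralizer {f x} := by
  simpa using map_centralizer_le_centralizer_image {x} f ⟨y, hy, rfl⟩

noncomputable def MonoidHom.rangeEquivRange {H K : Type*} [Group H] [Group K] {f g : H →* K}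
    (hf : Injective f) (hg : Injective g) : f.range ≃* g.range :=
  (MonoidHom.ofInjective hf).symm.trans (MonoidHom.ofInjective hg)

@[simp]
theorem MonoidHom.rangeEquivRange_apply {H K : Type*} [Group H] [Group K] {f g : H →* K}
    (hf : Injective f) (hg : Injective g) (h : H) :
    rangeEquivRange hf hg ⟨f h, h, rfl⟩ = ⟨g h, h, rfl⟩ := by
  have hsymm : (ofInjective hf).symm ⟨f h, h, rfl⟩ = h :=
    (ofInjective hf).symm_apply_eq.mpr (Subtype.ext (ofInjective_apply hf).symm)
  simp only [rangeEquivRange, MulEquiv.trans_apply, hsymm]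
  exact Subtype.ext (ofInjective_apply hg)

namespace HNNExtension

open NormalWord

variable {G : Type*} [Group G] {A B : Subgroup G} {φ : A ≃* B}

theorem exists_reducedWord_prod_eq (γ : HNNExtension G A B φ) :
    ∃ w : ReducedWord G A B, w.prod φ = γ := by
  obtain ⟨d⟩ := TransversalPair.nonempty G A B
  exact ⟨(γ • (empty : NormalWord d)).toReducedWord, by simp⟩

theorem toSubgroupEquiv_eq_conj (u : ℤˣ) (b : toSubgroup A B (-u)) :
    (of (toSubgroupEquiv φ (-u) b : G) : HNNExtension G A B φ) =
      (t ^ (u : ℤ))⁻¹ * of (b : G) * t ^ (u : ℤ) := by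
  rcases Int.units_eq_one_or u with rfl | rfl
  · rw [Units.val_one, zpow_one]
    exact equiv_symm_eq_conj (φ := φ) b
  · rw [Units.val_neg, Units.val_one, zpow_neg_one, inv_inv]
    exact equiv_eq_conj (φ := φ) b

namespace NormalWord.ReducedWord

theorem exists_prod_mul_of_s5 (w : ReducedWord G A B) (hw : w.toList ≠ []) (x : G) :
    ∃ w' : ReducedWord G A B, w'.head = w.head ∧ w'.prod φ = w.prod φ * of x := by
  obtain ⟨l, a, hl⟩ := (List.eq_nil_or_concat' _).resolve_left hw
  have chain := w.chain
  rw [hl] at chain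
  refine ⟨⟨w.head, l ++ [(a.1, a.2 * x)], ?_⟩, rfl, ?_⟩
  · rw [List.isChain_append] at chain ⊢
    refine ⟨chain.1, List.isChain_singleton _, fun z hz y hy => ?_⟩
    obtain rfl : y = (a.1, a.2 * x) := by simpa using hy.symm
    exact chain.2.2 z hz a (by simp)
  · simp [ReducedWord.prod, hl, mul_assoc]

/-- `of (k * w.head)` followed by the letters of `w`, and `w` with its last letter multiplied by
`x`, are reduced words for the same element, so Britton's lemma compares their heads. -/
theorem head_conj_mem_toSubgroup {w : ReducedWord G A B} {a : ℤˣ × G}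
    {l : List (ℤˣ × G)} (hw : w.toList = a :: l) {x k : G}
    (h : of k * w.prod φ = w.prod φ * of x) :
    w.head⁻¹ * k * w.head ∈ toSubgroup A B (-a.1) := by
  obtain ⟨w', hhead, hprod⟩ := w.exists_prod_mul_of_s5 (φ := φ) (by simp [hw]) x
  have hkw : (⟨k * w.head, w.toList, w.chain⟩ : ReducedWord G A B).prod φ = w'.prod φ := by
    rw [hprod, ← h]
    simp [ReducedWord.prod, mul_assoc]
  have := (HNNExtension.ReducedWord.map_fst_eq_and_of_prod_eq φ hkw).2 a.1 (by simp [hw])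
  simpa [hhead, mul_assoc] using inv_mem this

variable {x : G}

/-- Britton's lemma pinches the first letter `t ^ u`: the shorter word `tail` conjugates `x` to
`t ^ (-u) * (g⁻¹ * k * g) * t ^ u ∈ G`, and at the end an element of `G` conjugates `x` into
`toSubgroup A B u`. -/
theorem toList_eq_nil_of_semiconj
    (hx : ∀ u, ∀ g ∈ toSubgroup A B u, ¬IsConj x g) :
    ∀ (w : ReducedWord G A B) (k : G), of k * w.prod φ = w.prod φ * of x → w.toList = [] := by
  rintro ⟨g, l, hl⟩ k h
  induction l generalizing g k with
  | nil => rfl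
  | cons a l ih =>
    exfalso
    let b : toSubgroup A B (-a.1) := ⟨g⁻¹ * k * g, head_conj_mem_toSubgroup rfl h⟩
    let tail : ReducedWord G A B := ⟨a.2, l, hl.tail⟩
    have hprod : (⟨g, a :: l, hl⟩ : ReducedWord G A B).prod φ =
        of g * t ^ (a.1 : ℤ) * tail.prod φ := by
      simp [ReducedWord.prod, tail, mul_assoc]
    have htail : of (toSubgroupEquiv φ (-a.1) b : G) * tail.prod φ = tail.prod φ * of x := by
      rw [toSubgroupEquiv_eq_conj]
      rw [hprod] at h
      calc _ = (t ^ (a.1 : ℤ))⁻¹ * (of g)⁻¹ * (of k * (of g * t ^ (a.1 : ℤ) * tail.prod φ)) := by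
            simp [b, mul_assoc]
        _ = tail.prod φ * of x := by rw [h]; group
    have hl' : l = [] := ih a.2 hl.tail _ htail
    have htail_prod : tail.prod φ = of a.2 := by simp [tail, ReducedWord.prod, hl']
    rw [htail_prod] at htail
    refine hx _ _ (toSubgroupEquiv φ (-a.1) b).2 (isConj_iff.mpr ⟨a.2, of_injective (φ := φ) ?_⟩)
    rw [map_mul, map_mul, ← htail, map_inv, mul_inv_cancel_right]

end NormalWord.ReducedWord

variable {x : G}

theorem mem_range_of_of_mul_eq_mul_of (hA : ∀ a ∈ A, ¬IsConj x a) (hB : ∀ b ∈ B, ¬IsConj x b)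
    {k : G} {γ : HNNExtension G A B φ} (h : of k * γ = γ * of x) : γ ∈ of.range := by
  have hx : ∀ u, ∀ g ∈ toSubgroup A B u, ¬IsConj x g := by
    intro u
    rcases Int.units_eq_one_or u with rfl | rfl
    exacts [hA, hB]
  obtain ⟨w, rfl⟩ := exists_reducedWord_prod_eq γ
  exact ⟨w.head, by simp [ReducedWord.prod, w.toList_eq_nil_of_semiconj hx k h]⟩

theorem centralizer_of_singleton (hA : ∀ a ∈ A, ¬IsConj x a) (hB : ∀ b ∈ B, ¬IsConj x b) :
    Subgroup.centralizer {(of x : HNNExtension G A B φ)} = (Subgroup.centralizer {x}).map of :=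
  Subgroup.centralizer_singleton_eq_map_of_le_range (of_injective (φ := φ)) fun _ hγ =>
    mem_range_of_of_mul_eq_mul_of hA hB (Subgroup.mem_centralizer_singleton_iff.mp hγ).symm

theorem isConj_of_iff (hA : ∀ a ∈ A, ¬IsConj x a) (hB : ∀ b ∈ B, ¬IsConj x b) {k : G} :
    IsConj (of x : HNNExtension G A B φ) (of k) ↔ IsConj x k := by
  refine ⟨fun h => ?_, of.map_isConj⟩
  obtain ⟨γ, hγ⟩ := isConj_iff.mp h
  obtain ⟨g, rfl⟩ := mem_range_of_of_mul_eq_mul_of hA hB (γ := γ) (k := k) (by rw [← hγ]; group)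
  exact isConj_iff.mpr ⟨g, of_injective (φ := φ) (by simpa using hγ)⟩

theorem of_eq_t_mul_of_mul_inv_t {H : Type*} [Group H] {f g : H →* G}
    (hf : Injective f) (hg : Injective g) (h : H) :
    (of (g h) : HNNExtension G f.range g.range (MonoidHom.rangeEquivRange hf hg)) =
      t * of (f h) * t⁻¹ := by
  simpa using equiv_eq_conj (φ := MonoidHom.rangeEquivRange hf hg) ⟨f h, h, rfl⟩

theorem eq_top_of_range_of_le {S : Subgroup (HNNExtension G A B φ)} (hS : of.range ≤ S)
    (ht : t ∈ S) : S = ⊤ :=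
  eq_top_iff.mpr fun γ _ =>
    induction_on γ (fun g => hS ⟨g, rfl⟩) ht (fun _ _ => mul_mem) (fun _ => inv_mem)

end HNNExtension

namespace Monoid.Coprod

open Filter

variable {G : Type*} [Group G] {x : G}

theorem not_isConj_inl_inr {H : Type*} [Group H] (hx : x ≠ 1) (h : H) :
    ¬IsConj (inl x : G ∗ H) (inr h) := fun hc =>
  hx (isConj_one_left.mp (by simpa using (fst : G ∗ H →* G).map_isConj hc))

def toHNNExtensionFinSucc (n : ℕ) : G ∗ FreeGroup (Fin (n + 1)) →*
    HNNExtension (G ∗ FreeGroup (Fin n)) ⊥ ⊥ (MulEquiv.refl _) :=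
  lift (HNNExtension.of.comp inl)
    (FreeGroup.lift (Fin.lastCases HNNExtension.t fun i => HNNExtension.of (inr (.of i))))

def ofHNNExtensionFinSucc (n : ℕ) :
    HNNExtension (G ∗ FreeGroup (Fin n)) ⊥ ⊥ (MulEquiv.refl _) →* G ∗ FreeGroup (Fin (n + 1)) :=
  HNNExtension.lift (map (.id G) (FreeGroup.map Fin.castSucc)) (inr (.of (Fin.last n)))
    fun a => by simp [Subgroup.mem_bot.mp a.2]

theorem toHNNExtensionFinSucc_inl (n : ℕ) (z : G) :
    toHNNExtensionFinSucc n (inl z) = HNNExtension.of (inl z) :=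
  rfl

theorem ofHNNExtensionFinSucc_toHNNExtensionFinSucc (n : ℕ) (y : G ∗ FreeGroup (Fin (n + 1))) :
    ofHNNExtensionFinSucc n (toHNNExtensionFinSucc n y) = y := by
  suffices (ofHNNExtensionFinSucc n).comp (toHNNExtensionFinSucc n) = .id _ from
    DFunLike.congr_fun this y
  ext i
  · simp [toHNNExtensionFinSucc, ofHNNExtensionFinSucc]
  · induction i using Fin.lastCases <;> simp [toHNNExtensionFinSucc, ofHNNExtensionFinSucc]

theorem centralizer_inl_le_range_fin (hx : x ≠ 1) (n : ℕ) :
    Subgroup.centralizer {(inl x : G ∗ FreeGroup (Fin n))} ≤ inl.range := by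
  induction n with
  | zero =>
    rintro y -
    induction y using Coprod.induction_on with
    | inl c => exact ⟨c, rfl⟩
    | inr w => simp [Subsingleton.elim w 1]
    | mul _ _ h₁ h₂ => exact mul_mem h₁ h₂
  | succ n ih =>
    intro y hy
    have hbot : ∀ a ∈ (⊥ : Subgroup (G ∗ FreeGroup (Fin n))), ¬IsConj (inl x) a := by
      simpa using (map_ne_one_iff _ inl_injective).mpr hx
    have hy' := Subgroup.apply_mem_centralizer_singleton (toHNNExtensionFinSucc n) hy
    rw [toHNNExtensionFinSucc_inl, HNNExtension.centralizer_of_singleton hbot hbot] at hy'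
    obtain ⟨y', hy'_mem, hy'_eq⟩ := hy'
    obtain ⟨c, rfl⟩ := ih hy'_mem
    refine ⟨c, ?_⟩
    rw [← ofHNNExtensionFinSucc_toHNNExtensionFinSucc n y, ← hy'_eq]
    simp [ofHNNExtensionFinSucc]

def truncate (n : ℕ) : G ∗ FreeGroup ℕ →* G ∗ FreeGroup (Fin n) :=
  map (.id G) (FreeGroup.lift fun m => if h : m < n then .of ⟨m, h⟩ else 1)

theorem eventually_map_val_truncate (y : G ∗ FreeGroup ℕ) :
    ∀ᶠ n in atTop, map (.id G) (FreeGroup.map Fin.val) (truncate n y) = y := by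
  induction y using Coprod.induction_on with
  | inl c => exact .of_forall fun n => rfl
  | inr w =>
    induction w with
    | C1 => exact .of_forall fun n => by simp
    | of m => exact (eventually_gt_atTop m).mono fun n hn => by simp [truncate, hn]
    | inv_of m h => exact h.mono fun n hn => by simpa using congrArg (·⁻¹) hn
    | mul w₁ w₂ h₁ h₂ =>
      exact (h₁.and h₂).mono fun n hn => by simpa using congrArg₂ (· * ·) hn.1 hn.2
  | mul y₁ y₂ h₁ h₂ => exact (h₁.and h₂).mono fun n hn => by rw [map_mul, map_mul, hn.1, hn.2]

theorem centralizer_inl_freeGroup (hx : x ≠ 1) :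
    Subgroup.centralizer {(inl x : G ∗ FreeGroup ℕ)} = (Subgroup.centralizer {x}).map inl := by
  refine Subgroup.centralizer_singleton_eq_map_of_le_range inl_injective fun y hy => ?_
  obtain ⟨n, hn⟩ := (eventually_map_val_truncate y).exists
  obtain ⟨c, hc⟩ :=
    centralizer_inl_le_range_fin hx n (Subgroup.apply_mem_centralizer_singleton (truncate n) hy)
  exact ⟨c, by rw [← hn, ← hc]; rfl⟩

end Monoid.Coprod

namespace CentralizerEmbedding

open Monoid.Coprod HNNExtension

variable {C : Type*} [Group C] (c : ℕ → C) {x : C}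

def twist : C ∗ FreeGroup ℕ →* C ∗ FreeGroup ℕ :=
  lift inl (FreeGroup.lift fun n => inl (c n) * inr (.of n))

@[simp]
theorem twist_inl (z : C) : twist c (inl z) = inl z := by
  simp [twist]

theorem twist_inr_of (n : ℕ) : twist c (inr (.of n)) = inl (c n) * inr (.of n) := by
  simp [twist]

theorem twist_inv_twist (y : C ∗ FreeGroup ℕ) : twist c⁻¹ (twist c y) = y := by
  suffices (twist c⁻¹).comp (twist c) = .id _ from DFunLike.congr_fun this y
  ext <;> simp [twist]

theorem twist_injective : Injective (twist c) :=
  LeftInverse.injective (twist_inv_twist c)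

theorem twist_inr_injective : Injective ((twist c).comp inr : FreeGroup ℕ →* C ∗ FreeGroup ℕ) :=
  (twist_injective c).comp inr_injective

/-- `t * of (inr sₙ) * t⁻¹ = of (inl cₙ * inr sₙ)` -/
abbrev Γ₁ : Type _ :=
  HNNExtension (C ∗ FreeGroup ℕ) inr.range ((twist c).comp inr).range
    (MonoidHom.rangeEquivRange inr_injective (twist_inr_injective c))

theorem of_inr_injective : Injective (of.comp inr : FreeGroup ℕ →* Γ₁ c) :=
  (of_injective _).comp inr_injective

theorem of_inr_map_succ_injective :
    Injective ((of.comp inr).comp (FreeGroup.map Nat.succ) : FreeGroup ℕ →* Γ₁ c) :=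
  (of_inr_injective c).comp (FreeGroup.map_injective Nat.succ_injective)

/-- `t * of (of (inr sₙ)) * t⁻¹ = of (of (inr sₙ₊₁))` -/
abbrev Γ₂ : Type _ :=
  HNNExtension (Γ₁ c) (of.comp inr).range ((of.comp inr).comp (FreeGroup.map Nat.succ)).range
    (MonoidHom.rangeEquivRange (of_inr_injective c) (of_inr_map_succ_injective c))

noncomputable def embedding : C →* Γ₂ c :=
  of.comp (of.comp inl)

theorem embedding_injective : Injective (embedding c) :=
  (of_injective _).comp ((of_injective _).comp inl_injective)

variable {c}

theorem not_isConj_inl_of_mem_range_inr (hx : x ≠ 1) :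
    ∀ a ∈ (inr : FreeGroup ℕ →* C ∗ FreeGroup ℕ).range, ¬IsConj (inl x) a := by
  rintro _ ⟨w, rfl⟩
  exact not_isConj_inl_inr hx w

theorem not_isConj_inl_of_mem_range_twist_inr (hx : x ≠ 1) :
    ∀ a ∈ ((twist c).comp inr).range, ¬IsConj (inl x) a := by
  rintro _ ⟨w, rfl⟩ h
  exact not_isConj_inl_inr hx w (by simpa [twist_inv_twist] using (twist c⁻¹).map_isConj h)

theorem centralizer_of_inl (hx : x ≠ 1) :
    Subgroup.centralizer {(of (inl x) : Γ₁ c)} = (Subgroup.centralizer {inl x}).map of :=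
  centralizer_of_singleton (not_isConj_inl_of_mem_range_inr hx)
    (not_isConj_inl_of_mem_range_twist_inr hx)

theorem not_isConj_of_inl_of_mem_range_of_inr (hx : x ≠ 1) :
    ∀ a ∈ (of.comp inr : FreeGroup ℕ →* Γ₁ c).range, ¬IsConj (of (inl x)) a := by
  rintro _ ⟨w, rfl⟩
  rw [MonoidHom.comp_apply, isConj_of_iff (not_isConj_inl_of_mem_range_inr hx)
    (not_isConj_inl_of_mem_range_twist_inr hx)]
  exact not_isConj_inl_inr hx w

theorem centralizer_of_of_inl (hx : x ≠ 1) :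
    Subgroup.centralizer {(of (of (inl x)) : Γ₂ c)} =
      (Subgroup.centralizer {of (inl x)}).map of :=
  centralizer_of_singleton (not_isConj_of_inl_of_mem_range_of_inr hx) fun _ ⟨_, hw⟩ =>
    not_isConj_of_inl_of_mem_range_of_inr hx _ ⟨_, hw⟩

theorem centralizer_embedding (hx : x ≠ 1) :
    Subgroup.centralizer {embedding c x} = (Subgroup.centralizer {x}).map (embedding c) := by
  simp only [embedding, MonoidHom.comp_apply, centralizer_of_of_inl hx, centralizer_of_inl hx,
    centralizer_inl_freeGroup hx, Subgroup.map_map]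

theorem of_inl_eq_commutator (n : ℕ) :
    (of (inl (c n)) : Γ₁ c) = t * of (inr (.of n)) * t⁻¹ * (of (inr (.of n)))⁻¹ := by
  have h := of_eq_t_mul_of_mul_inv_t inr_injective (twist_inr_injective c) (.of n)
  simp only [MonoidHom.comp_apply, twist_inr_of] at h
  exact eq_mul_inv_of_mul_eq ((map_mul _ _ _).symm.trans h)

theorem of_inr_succ_eq_conj (n : ℕ) :
    (of (of (inr (.of (n + 1)))) : Γ₂ c) = t * of (of (inr (.of n))) * t⁻¹ :=
  of_eq_t_mul_of_mul_inv_t (of_inr_injective c) (of_inr_map_succ_injective c) (.of n)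

theorem fg_Γ₂ (hc : Surjective c) : Group.FG (Γ₂ c) := by
  let s : ℕ → Γ₂ c := fun n => of (of (inr (.of n)))
  let S := Subgroup.closure {s 0, of t, t}
  have ht₁ : of t ∈ S := Subgroup.subset_closure (by simp)
  have ht₂ : t ∈ S := Subgroup.subset_closure (by simp)
  have hs : ∀ n, s n ∈ S := by
    intro n
    induction n with
    | zero => exact Subgroup.subset_closure (by simp)
    | succ n ih =>
      rw [show s (n + 1) = _ from of_inr_succ_eq_conj n]
      exact mul_mem (mul_mem ht₂ ih) (inv_mem ht₂)
  have hC : ∀ z, of (of (inl z)) ∈ S := by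
    intro z
    obtain ⟨n, rfl⟩ := hc z
    rw [of_inl_eq_commutator, map_mul, map_mul, map_mul, map_inv, map_inv]
    exact mul_mem (mul_mem (mul_mem ht₁ (hs n)) (inv_mem ht₁)) (inv_mem (hs n))
  have hbase : ∀ g, of (of g) ∈ S := by
    intro g
    induction g using Monoid.Coprod.induction_on with
    | inl z => exact hC z
    | inr w =>
      induction w with
      | C1 => simp
      | of n => exact hs n
      | inv_of n h => simpa using inv_mem h
      | mul w₁ w₂ h₁ h₂ => simpa using mul_mem h₁ h₂
    | mul g₁ g₂ h₁ h₂ => simpa using mul_mem h₁ h₂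
  have hΓ₁ : S.comap of = ⊤ := eq_top_of_range_of_le (by rintro _ ⟨g, rfl⟩; exact hbase g) ht₁
  have hΓ₂ : S = ⊤ := eq_top_of_range_of_le
    (by rintro _ ⟨γ, rfl⟩; exact Subgroup.mem_comap.mp (hΓ₁ ▸ Subgroup.mem_top γ)) ht₂
  exact Group.fg_iff.mpr ⟨_, hΓ₂, Set.toFinite _⟩

end CentralizerEmbedding

open CentralizerEmbedding in
theorem exists_fg_embedding_centralizer_eq_range_general (C : Type) [Group C] [Countable C]
    (x : C) (hx : x ∈ Subgroup.center C) (hx1 : x ≠ 1) :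
    ∃ (Γ : Type) (_ : Group Γ), Group.FG Γ ∧
      ∃ φ : C →* Γ, Function.Injective φ ∧
        Subgroup.centralizer {φ x} = φ.range := by
  obtain ⟨c, hc⟩ := exists_surjective_nat C
  refine ⟨Γ₂ c, inferInstance, fg_Γ₂ hc, embedding c, embedding_injective c, ?_⟩
  rw [centralizer_embedding hx1, Subgroup.centralizer_eq_top_iff_subset.mpr
    (Set.singleton_subset_iff.mpr hx)]
  exact (MonoidHom.range_eq_map _).symm

/-- Every countable torsion-free group `C` with a nontrivial central element `x`
embeds into a finitely generated group `Γ` in such a way that the centralizer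
of the image of `x` in `Γ` is exactly the image of `C`. -/
theorem exists_fg_embedding_centralizer_eq_range (C : Type) [Group C] [Countable C]
    (hC : Monoid.IsTorsionFree C) (x : C) (hx : x ∈ Subgroup.center C) (hx1 : x ≠ 1) :
    ∃ (Γ : Type) (_ : Group Γ), Group.FG Γ ∧
      ∃ φ : C →* Γ, Function.Injective φ ∧
        Subgroup.centralizer {φ x} = φ.range :=
  exists_fg_embedding_centralizer_eq_range_general C x hx hx1
end
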